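/- arXiv:1909.08276 — 2 statements merged into one kernel-verified Lean document; each statement's English description precedes it below -/
import Mathlib

section
/- Assume B : (0,∞) → [0,∞) is continuous and bounded on some neighborhood of 0. Then the function (t,x) ↦ x e^t is the unique locally bounded mild solution of the dual mitosis equation with initial datum f(x) = x; consequently, for every f : (0,∞) → ℝ with ‖f‖_Ḃ < ∞ and every t ≥ 0, one has ‖M_t f‖_Ḃ ≤ e^t ‖f‖_Ḃ, i.e. |M_t f(x)| ≤ e^t x ‖f‖_Ḃ for all x > 0. -/
open MeasureTheory Real Set Filter Topology

noncomputable section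

/-- A function on `(0,∞)` is locally bounded if it is bounded on the intersection of
`(0,∞)` with every bounded set. -/
def LocBddOn (f : ℝ → ℝ) : Prop :=
  ∀ r > 0, ∃ C, ∀ x, 0 < x → x ≤ r → |f x| ≤ C

/-- A function on `[0,∞) × (0,∞)` is locally bounded if it is bounded on the intersection of
`[0,∞) × (0,∞)` with every bounded set. -/
def LocBdd2 (φ : ℝ → ℝ → ℝ) : Prop :=
  ∀ r > 0, ∃ C, ∀ t x, 0 ≤ t → t ≤ r → 0 < x → x ≤ r → |φ t x| ≤ C

/-- Mild solution of the dual mitosis equation with initial datum `f`. -/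
def IsMildSol (B f : ℝ → ℝ) (φ : ℝ → ℝ → ℝ) : Prop :=
  ∀ t ≥ 0, ∀ x > 0,
    φ t x = f (x * exp t) * Real.exp (-∫ s in (0:ℝ)..t, B (x * exp s))
      + 2 * ∫ τ in (0:ℝ)..t,
          B (x * exp τ) * Real.exp (-∫ s in (0:ℝ)..τ, B (x * exp s)) * φ (t - τ) (x * exp τ / 2)

/-- `B : (0,∞) → [0,∞)` is continuous and bounded on some neighborhood of `0`. -/
def Bhyp (B : ℝ → ℝ) : Prop :=
  ContinuousOn B (Ioi 0) ∧ (∀ x > 0, 0 ≤ B x) ∧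
    ∃ ε > 0, ∃ C, ∀ x, 0 < x → x < ε → B x ≤ C

/-!
In the characteristic coordinates `(s, a)` with `a = x eˢ` the transport term disappears, and a
mild solution becomes a solution `W s a = φ s (a e⁻ˢ)` of the Volterra equation
`W(s,a) = e^{-H(a,s)} (f(a) + 2 ∫₀ˢ B(a e⁻ᵘ) e^{H(a,u)} W(u, a/2) du)`, where `H` integrates `B`
along the characteristic. Since `∫₀ˢ B(a e⁻ᵘ) e^{H(a,u)} du = e^{H(a,s)} - 1`, the function
`W = C a` solves it for the datum `C a`; so if `|f(a)| ≤ C a` and `|W| ≤ U`, `B ≤ M` on a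
bounded region, iterating the equation gives `|W(s,a)| ≤ C a + U (2 M s)ⁿ / n!` for every `n`.
Letting `n → ∞` gives the comparison, and, applied with `C = 0` to the difference of two
solutions, uniqueness.
-/

namespace Bhyp

variable {B : ℝ → ℝ}

lemma nonneg (hB : Bhyp B) {y : ℝ} (hy : 0 < y) : 0 ≤ B y := hB.2.1 y hy

lemma continuous_comp (hB : Bhyp B) {g : ℝ → ℝ} (hg : Continuous g) (hpos : ∀ u, 0 < g u) :
    Continuous fun u => B (g u) :=
  hB.1.comp_continuous hg hpos

lemma exists_bound (hB : Bhyp B) (K : ℝ) : ∃ M, 0 ≤ M ∧ ∀ y, 0 < y → y ≤ K → B y ≤ M := by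
  obtain ⟨hc, -, ε, hε, C₀, hC₀⟩ := hB
  obtain ⟨C₁, hC₁⟩ := isCompact_Icc.exists_bound_of_continuousOn
    (hc.mono fun y (hy : y ∈ Icc ε K) => hε.trans_le hy.1)
  refine ⟨max (max C₀ C₁) 0, le_max_right _ _, fun y hy hyK => ?_⟩
  rcases lt_or_ge y ε with h | h
  · exact le_max_of_le_left (le_max_of_le_left (hC₀ y hy h))
  · exact le_max_of_le_left (le_max_of_le_right ((le_norm_self _).trans (hC₁ y ⟨h, hyK⟩)))

lemma continuous_comp_mul_exp_neg (hB : Bhyp B) {a : ℝ} (ha : 0 < a) :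
    Continuous fun u => B (a * exp (-u)) :=
  hB.continuous_comp (continuous_const.mul (continuous_exp.comp continuous_neg)) fun _ => by
    positivity

end Bhyp

lemma integral_mul_exp_primitive {q : ℝ → ℝ} (hq : Continuous q) (t : ℝ) :
    ∫ τ in (0:ℝ)..t, q τ * exp (∫ s in (0:ℝ)..τ, q s) = exp (∫ s in (0:ℝ)..t, q s) - 1 := by
  have hderiv : ∀ τ, HasDerivAt (fun τ => exp (∫ s in (0:ℝ)..τ, q s))
      (q τ * exp (∫ s in (0:ℝ)..τ, q s)) τ := fun τ => by
    simpa [mul_comm] using ((hq.integral_hasStrictDerivAt 0 τ).hasDerivAt).exp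
  have hcont : Continuous fun τ => q τ * exp (∫ s in (0:ℝ)..τ, q s) :=
    hq.mul (continuous_iff_continuousAt.2 fun τ => (hderiv τ).continuousAt)
  rw [intervalIntegral.integral_eq_sub_of_hasDerivAt (fun τ _ => hderiv τ)
    (hcont.intervalIntegrable _ _)]
  simp

lemma aestronglyMeasurable_primitive (q : ℝ → ℝ) {s : ℝ} (hs : 0 ≤ s) :
    AEStronglyMeasurable (fun u => ∫ v in (0:ℝ)..u, q v) (volume.restrict (Ioc 0 s)) := by
  -- `q` is integrable on `[0, u]` for `u` below `b` and on no `[0, u]` with `u > b`; the primitive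
  -- is continuous below `b` and, by the junk value of the integral, zero above.
  set S := {u | 0 ≤ u ∧ u ≤ s ∧ IntervalIntegrable q volume 0 u}
  have h0S : (0:ℝ) ∈ S := ⟨le_rfl, hs, IntervalIntegrable.refl⟩
  have hS : S.Nonempty := ⟨0, h0S⟩
  have hbdd : BddAbove S := ⟨s, fun u hu => hu.2.1⟩
  set b := sSup S
  have hb0 : 0 ≤ b := le_csSup hbdd h0S
  have hbelow : ContinuousOn (fun u => ∫ v in (0:ℝ)..u, q v) (Ioo 0 b) := by
    intro u hu
    obtain ⟨u', ⟨hu'0, -, hq⟩, huu'⟩ := exists_lt_of_lt_csSup hS hu.2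
    have hcont := intervalIntegral.continuousOn_primitive_interval' hq left_mem_uIcc
    rw [uIcc_of_le hu'0] at hcont
    exact (hcont.continuousAt (Icc_mem_nhds hu.1 huu')).continuousWithinAt
  have habove : ContinuousOn (fun u => ∫ v in (0:ℝ)..u, q v) (Ioc b s) :=
    continuousOn_const.congr fun u hu => intervalIntegral.integral_undef fun hq =>
      hu.1.not_ge (le_csSup hbdd ⟨hb0.trans hu.1.le, hu.2, hq⟩)
  have hb : volume.restrict {b} = 0 := Measure.restrict_eq_zero.2 (measure_singleton b)
  have hcover : Ioc 0 s ⊆ Ioo 0 b ∪ {b} ∪ Ioc b s := by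
    intro u hu
    rcases lt_trichotomy u b with h | rfl | h
    · exact Or.inl (Or.inl ⟨hu.1, h⟩)
    · exact Or.inl (Or.inr rfl)
    · exact Or.inr ⟨h, hu.2⟩
  refine AEStronglyMeasurable.mono_set hcover (aestronglyMeasurable_union_iff.2
    ⟨aestronglyMeasurable_union_iff.2 ⟨hbelow.aestronglyMeasurable measurableSet_Ioo, ?_⟩,
      habove.aestronglyMeasurable measurableSet_Ioc⟩)
  rw [hb]
  exact aestronglyMeasurable_zero_measure _

section Characteristics

variable {B f : ℝ → ℝ}

/-- The division rate accumulated along the characteristic `x eᵗ = a` during the time span `s`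
before it reaches `a`. -/
def hazard (B : ℝ → ℝ) (a s : ℝ) : ℝ := ∫ u in (0:ℝ)..s, B (a * exp (-u))

def charWeight (B : ℝ → ℝ) (a u : ℝ) : ℝ := B (a * exp (-u)) * exp (hazard B a u)

def inCharCoords (φ : ℝ → ℝ → ℝ) (s a : ℝ) : ℝ := φ s (a * exp (-s))

def IsCharSol (B f : ℝ → ℝ) (W : ℝ → ℝ → ℝ) : Prop :=
  ∀ s ≥ 0, ∀ a > 0, W s a =
    exp (-hazard B a s) * (f a + 2 * ∫ u in (0:ℝ)..s, charWeight B a u * W u (a / 2))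

lemma inCharCoords_mul_exp (φ : ℝ → ℝ → ℝ) (t x : ℝ) : inCharCoords φ t (x * exp t) = φ t x := by
  rw [inCharCoords, mul_assoc, ← exp_add, add_neg_cancel, exp_zero, mul_one]

lemma hasDerivAt_hazard (hB : Bhyp B) {a : ℝ} (ha : 0 < a) (s : ℝ) :
    HasDerivAt (hazard B a) (B (a * exp (-s))) s :=
  ((hB.continuous_comp_mul_exp_neg ha).integral_hasStrictDerivAt 0 s).hasDerivAt

lemma continuous_hazard (hB : Bhyp B) {a : ℝ} (ha : 0 < a) : Continuous (hazard B a) :=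
  continuous_iff_continuousAt.2 fun s => (hasDerivAt_hazard hB ha s).continuousAt

lemma monotone_hazard (hB : Bhyp B) {a : ℝ} (ha : 0 < a) : Monotone (hazard B a) :=
  monotone_of_deriv_nonneg (fun s => (hasDerivAt_hazard hB ha s).differentiableAt)
    fun s => (hasDerivAt_hazard hB ha s).deriv ▸ hB.nonneg (by positivity)

lemma hazard_sub_hazard (hB : Bhyp B) {a : ℝ} (ha : 0 < a) (s τ : ℝ) :
    hazard B a s - hazard B a (s - τ) = ∫ σ in (0:ℝ)..τ, B (a * exp (-s) * exp σ) := by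
  have hchar : ∀ σ, a * exp (-s) * exp σ = a * exp (-(s - σ)) := fun σ => by
    rw [mul_assoc, ← exp_add]; ring_nf
  simp_rw [hchar]
  rw [intervalIntegral.integral_comp_sub_left (fun u => B (a * exp (-u))) s, sub_zero, hazard,
    hazard, intervalIntegral.integral_interval_sub_left]
  all_goals exact (hB.continuous_comp_mul_exp_neg ha).intervalIntegrable _ _

lemma continuous_charWeight (hB : Bhyp B) {a : ℝ} (ha : 0 < a) : Continuous (charWeight B a) :=
  (hB.continuous_comp_mul_exp_neg ha).mul (continuous_exp.comp (continuous_hazard hB ha))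

lemma charWeight_nonneg (hB : Bhyp B) {a : ℝ} (ha : 0 < a) (u : ℝ) : 0 ≤ charWeight B a u :=
  mul_nonneg (hB.nonneg (by positivity)) (exp_pos _).le

lemma charWeight_le (hB : Bhyp B) {a s u M : ℝ} (ha : 0 < a) (hu : u ∈ Icc 0 s)
    (hM : ∀ y, 0 < y → y ≤ a → B y ≤ M) : charWeight B a u ≤ M * exp (hazard B a s) := by
  have hBM : B (a * exp (-u)) ≤ M :=
    hM _ (by positivity) (mul_le_of_le_one_right ha.le (exp_le_one_iff.2 (by linarith [hu.1])))
  exact mul_le_mul hBM (exp_le_exp.2 (monotone_hazard hB ha hu.2)) (exp_pos _).le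
    ((hB.nonneg (by positivity)).trans hBM)

lemma integral_charWeight (hB : Bhyp B) {a : ℝ} (ha : 0 < a) (s : ℝ) :
    ∫ u in (0:ℝ)..s, charWeight B a u = exp (hazard B a s) - 1 :=
  integral_mul_exp_primitive (hB.continuous_comp_mul_exp_neg ha) s

lemma IsMildSol.isCharSol (hB : Bhyp B) {φ : ℝ → ℝ → ℝ} (hφ : IsMildSol B f φ) :
    IsCharSol B f (inCharCoords φ) := by
  intro s hs a ha
  have hintegrand : ∀ τ, B (a * exp (-s) * exp τ)
      * exp (-∫ σ in (0:ℝ)..τ, B (a * exp (-s) * exp σ)) * φ (s - τ) (a * exp (-s) * exp τ / 2)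
      = exp (-hazard B a s) * (charWeight B a (s - τ) * inCharCoords φ (s - τ) (a / 2)) := by
    intro τ
    have hchar : a * exp (-s) * exp τ = a * exp (-(s - τ)) := by rw [mul_assoc, ← exp_add]; ring_nf
    rw [← hazard_sub_hazard hB ha, neg_sub, exp_sub, hchar, charWeight, inCharCoords,
      ← div_mul_eq_mul_div, exp_neg (hazard B a s)]
    ring
  have hs' : a * exp (-s) * exp s = a := by
    rw [mul_assoc, ← exp_add, neg_add_cancel, exp_zero, mul_one]
  have hH0 : hazard B a 0 = 0 := intervalIntegral.integral_same
  rw [inCharCoords, hφ s hs _ (by positivity), hs', ← hazard_sub_hazard hB ha, sub_self, hH0,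
    sub_zero]
  simp_rw [hintegrand]
  rw [intervalIntegral.integral_comp_sub_left
      (fun u => exp (-hazard B a s) * (charWeight B a u * inCharCoords φ u (a / 2))) s,
    sub_self, sub_zero, intervalIntegral.integral_const_mul]
  ring

/-- No measurability of `W` is assumed: it is inherited from the equation. -/
lemma IsCharSol.aestronglyMeasurable (hB : Bhyp B) {W : ℝ → ℝ → ℝ} (hW : IsCharSol B f W)
    {a s : ℝ} (ha : 0 < a) (hs : 0 ≤ s) :
    AEStronglyMeasurable (fun u => W u a) (volume.restrict (Ioc 0 s)) := by
  have hrhs : AEStronglyMeasurable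
      (fun u => exp (-hazard B a u) * (f a + 2 * ∫ v in (0:ℝ)..u, charWeight B a v * W v (a / 2)))
      (volume.restrict (Ioc 0 s)) :=
    (continuous_exp.comp (continuous_hazard hB ha).neg).aestronglyMeasurable.mul
      (aestronglyMeasurable_const.add ((aestronglyMeasurable_primitive _ hs).const_mul 2))
  refine hrhs.congr ?_
  filter_upwards [ae_restrict_mem measurableSet_Ioc] with u hu
  exact (hW u hu.1.le a ha).symm

lemma IsCharSol.intervalIntegrable (hB : Bhyp B) {W : ℝ → ℝ → ℝ} (hW : IsCharSol B f W)
    (hWb : LocBdd2 W) {a s : ℝ} (ha : 0 < a) (hs : 0 ≤ s) :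
    IntervalIntegrable (fun u => charWeight B a u * W u (a / 2)) volume 0 s := by
  obtain ⟨U, hU⟩ := hWb (max s a) (lt_max_of_lt_right ha)
  rw [intervalIntegrable_iff_integrableOn_Ioc_of_le hs]
  refine (((continuous_charWeight hB ha).intervalIntegrable 0 s).1).mul_bdd (c := U)
    (hW.aestronglyMeasurable hB (half_pos ha) hs) ?_
  filter_upwards [ae_restrict_mem measurableSet_Ioc] with u hu
  exact hU u (a / 2) hu.1.le (hu.2.trans (le_max_left _ _)) (half_pos ha)
    ((half_le_self ha.le).trans (le_max_right _ _))

lemma IsCharSol.sub (hB : Bhyp B) {g : ℝ → ℝ} {W₁ W₂ : ℝ → ℝ → ℝ} (hW₁ : IsCharSol B f W₁)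
    (hW₂ : IsCharSol B g W₂) (hb₁ : LocBdd2 W₁) (hb₂ : LocBdd2 W₂) :
    IsCharSol B (fun a => f a - g a) (fun s a => W₁ s a - W₂ s a) := by
  intro s hs a ha
  dsimp only
  have hsplit : ∫ u in (0:ℝ)..s, charWeight B a u * (W₁ u (a / 2) - W₂ u (a / 2))
      = (∫ u in (0:ℝ)..s, charWeight B a u * W₁ u (a / 2))
        - ∫ u in (0:ℝ)..s, charWeight B a u * W₂ u (a / 2) := by
    simp_rw [mul_sub]
    exact intervalIntegral.integral_sub (hW₁.intervalIntegrable hB hb₁ ha hs)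
      (hW₂.intervalIntegrable hB hb₂ ha hs)
  rw [hsplit, hW₁ s hs a ha, hW₂ s hs a ha]
  ring

lemma IsCharSol.abs_le_of_abs_le_half (hB : Bhyp B) {W : ℝ → ℝ → ℝ} (hW : IsCharSol B f W)
    {C a s M c : ℝ} {n : ℕ} (ha : 0 < a) (hs : 0 ≤ s) (hfa : |f a| ≤ C * a)
    (hM : ∀ y, 0 < y → y ≤ a → B y ≤ M) (hc : 0 ≤ c)
    (hhalf : ∀ u ∈ Icc 0 s, |W u (a / 2)| ≤ C * (a / 2) + c * u ^ n) :
    |W s a| ≤ C * a + 2 * M * c * s ^ (n + 1) / (n + 1) := by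
  set D : ℝ → ℝ := fun u => C * (a / 2) * charWeight B a u + M * exp (hazard B a s) * c * u ^ n
  have hD : ∀ u ∈ Icc 0 s, |charWeight B a u * W u (a / 2)| ≤ D u := by
    intro u hu
    rw [abs_mul, abs_of_nonneg (charWeight_nonneg hB ha u)]
    calc charWeight B a u * |W u (a / 2)|
        ≤ charWeight B a u * (C * (a / 2) + c * u ^ n) :=
          mul_le_mul_of_nonneg_left (hhalf u hu) (charWeight_nonneg hB ha u)
      _ = C * (a / 2) * charWeight B a u + charWeight B a u * (c * u ^ n) := by ring
      _ ≤ C * (a / 2) * charWeight B a u + M * exp (hazard B a s) * (c * u ^ n) := by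
          gcongr
          · exact mul_nonneg hc (pow_nonneg hu.1 n)
          · exact charWeight_le hB ha hu hM
      _ = D u := by ring
  have hcw : Continuous fun u => C * (a / 2) * charWeight B a u :=
    continuous_const.mul (continuous_charWeight hB ha)
  have hpow : Continuous fun u : ℝ => M * exp (hazard B a s) * c * u ^ n :=
    continuous_const.mul (continuous_pow n)
  have hDint : IntervalIntegrable D volume 0 s := (hcw.add hpow).intervalIntegrable _ _
  have hintegral : |∫ u in (0:ℝ)..s, charWeight B a u * W u (a / 2)|
      ≤ C * (a / 2) * (exp (hazard B a s) - 1)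
        + M * exp (hazard B a s) * c * (s ^ (n + 1) / (n + 1)) := by
    calc |∫ u in (0:ℝ)..s, charWeight B a u * W u (a / 2)|
        ≤ ∫ u in (0:ℝ)..s, |charWeight B a u * W u (a / 2)| :=
          intervalIntegral.abs_integral_le_integral_abs hs
      _ ≤ ∫ u in (0:ℝ)..s, D u := by
          rw [intervalIntegral.integral_of_le hs, intervalIntegral.integral_of_le hs]
          refine integral_mono_of_nonneg (Eventually.of_forall fun u => abs_nonneg _)
            (hDint.1) ?_
          filter_upwards [ae_restrict_mem measurableSet_Ioc] with u hu
          exact hD u (Ioc_subset_Icc_self hu)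
      _ = _ := by
          rw [intervalIntegral.integral_add (hcw.intervalIntegrable _ _)
            (hpow.intervalIntegrable _ _), intervalIntegral.integral_const_mul,
            intervalIntegral.integral_const_mul, integral_charWeight hB ha, integral_pow]
          simp
  rw [hW s hs a ha, abs_mul, abs_of_pos (exp_pos _)]
  calc exp (-hazard B a s) * |f a + 2 * ∫ u in (0:ℝ)..s, charWeight B a u * W u (a / 2)|
      ≤ exp (-hazard B a s) * (C * a + 2 * (C * (a / 2) * (exp (hazard B a s) - 1)
          + M * exp (hazard B a s) * c * (s ^ (n + 1) / (n + 1)))) := by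
        gcongr
        exact (abs_add_le _ _).trans (by rw [abs_mul, abs_two]; linarith)
    _ = C * a + 2 * M * c * s ^ (n + 1) / (n + 1) := by
        rw [exp_neg]
        field_simp
        ring

theorem IsCharSol.abs_le (hB : Bhyp B) {W : ℝ → ℝ → ℝ} (hW : IsCharSol B f W) (hWb : LocBdd2 W)
    {C : ℝ} (hf : ∀ x > 0, |f x| ≤ C * x) : ∀ s ≥ 0, ∀ a > 0, |W s a| ≤ C * a := by
  intro s₀ hs₀ a₀ ha₀
  have hC : 0 ≤ C := by simpa using (abs_nonneg _).trans (hf 1 one_pos)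
  obtain ⟨U, hU⟩ := hWb (max s₀ a₀) (lt_max_of_lt_right ha₀)
  have hU0 : 0 ≤ U := (abs_nonneg _).trans (hU s₀ a₀ hs₀ (le_max_left _ _) ha₀ (le_max_right _ _))
  obtain ⟨M, hM0, hM⟩ := hB.exists_bound a₀
  have hiter : ∀ n : ℕ, ∀ s a, 0 ≤ s → s ≤ s₀ → 0 < a → a ≤ a₀ →
      |W s a| ≤ C * a + U * ((2 * M * s) ^ n / n.factorial) := by
    intro n
    induction n with
    | zero =>
      intro s a hs hss ha haa
      have := hU s a hs (hss.trans (le_max_left _ _)) ha (haa.trans (le_max_right _ _))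
      simp only [pow_zero, Nat.factorial_zero, Nat.cast_one, div_one, mul_one]
      linarith [mul_nonneg hC ha.le]
    | succ n ih =>
      intro s a hs hss ha haa
      have hstep := hW.abs_le_of_abs_le_half hB (c := U * (2 * M) ^ n / n.factorial) (n := n)
        ha hs (hf a ha) (fun y hy hya => hM y hy (hya.trans haa)) (by positivity)
        fun u hu => by
          refine (ih u (a / 2) hu.1 (hu.2.trans hss) (half_pos ha) (by linarith)).trans_eq ?_
          rw [mul_pow]
          ring
      convert hstep using 2
      rw [Nat.factorial_succ]
      push_cast
      field_simp
      ring
  have hlim : Tendsto (fun n : ℕ => C * a₀ + U * ((2 * M * s₀) ^ n / n.factorial)) atTop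
      (𝓝 (C * a₀)) := by
    simpa using ((FloorSemiring.tendsto_pow_div_factorial_atTop (2 * M * s₀)).const_mul U).const_add
      (C * a₀)
  exact ge_of_tendsto' hlim fun n => hiter n s₀ a₀ hs₀ le_rfl ha₀ le_rfl

end Characteristics

lemma LocBdd2.inCharCoords {φ : ℝ → ℝ → ℝ} (hφ : LocBdd2 φ) : LocBdd2 (inCharCoords φ) := by
  intro r hr
  obtain ⟨C, hC⟩ := hφ r hr
  exact ⟨C, fun t x ht htr hx hxr => hC t _ ht htr (by positivity)
    ((mul_le_of_le_one_right hx.le (exp_le_one_iff.2 (by linarith))).trans hxr)⟩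

lemma LocBdd2.sub {φ ψ : ℝ → ℝ → ℝ} (hφ : LocBdd2 φ) (hψ : LocBdd2 ψ) :
    LocBdd2 fun t x => φ t x - ψ t x := by
  intro r hr
  obtain ⟨C, hC⟩ := hφ r hr
  obtain ⟨D, hD⟩ := hψ r hr
  exact ⟨C + D, fun t x ht htr hx hxr =>
    (abs_sub _ _).trans (add_le_add (hC t x ht htr hx hxr) (hD t x ht htr hx hxr))⟩

lemma locBdd2_mul_exp : LocBdd2 fun t x => x * exp t := by
  intro r hr
  refine ⟨r * exp r, fun t x ht htr hx hxr => ?_⟩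
  rw [abs_of_pos (by positivity)]
  exact mul_le_mul hxr (exp_le_exp.2 htr) (exp_pos _).le hr.le

lemma isMildSol_mul_exp {B : ℝ → ℝ} (hB : Bhyp B) :
    IsMildSol B (fun x => x) fun t x => x * exp t := by
  intro t _ x hx
  have hB' : Continuous fun s => B (x * exp s) :=
    hB.continuous_comp (continuous_const.mul continuous_exp) fun _ => by positivity
  have hsurvival := integral_mul_exp_primitive hB'.neg t
  simp only [Pi.neg_apply, intervalIntegral.integral_neg, neg_mul] at hsurvival
  have hsize : ∀ τ, x * exp τ / 2 * exp (t - τ) = x * exp t / 2 := fun τ => by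
    rw [div_mul_eq_mul_div, mul_assoc, ← exp_add, add_sub_cancel]
  simp_rw [hsize, intervalIntegral.integral_mul_const]
  linear_combination (x * exp t) * hsurvival

theorem IsMildSol.eq_of_locBdd2 {B f : ℝ → ℝ} (hB : Bhyp B) {φ₁ φ₂ : ℝ → ℝ → ℝ}
    (hφ₁ : IsMildSol B f φ₁) (hφ₂ : IsMildSol B f φ₂) (hb₁ : LocBdd2 φ₁) (hb₂ : LocBdd2 φ₂) :
    ∀ t ≥ 0, ∀ x > 0, φ₁ t x = φ₂ t x := by
  intro t ht x hx
  have hdiff := ((hφ₁.isCharSol hB).sub hB (hφ₂.isCharSol hB) hb₁.inCharCoords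
    hb₂.inCharCoords).abs_le hB (hb₁.inCharCoords.sub hb₂.inCharCoords) (C := 0) (by simp)
    t ht (x * exp t) (by positivity)
  simpa [inCharCoords_mul_exp, sub_eq_zero] using hdiff

theorem IsMildSol.abs_le {B f : ℝ → ℝ} (hB : Bhyp B) {φ : ℝ → ℝ → ℝ} (hφ : IsMildSol B f φ)
    (hb : LocBdd2 φ) {C : ℝ} (hf : ∀ x > 0, |f x| ≤ C * x) :
    ∀ t ≥ 0, ∀ x > 0, |φ t x| ≤ exp t * C * x := by
  intro t ht x hx
  have hline := (hφ.isCharSol hB).abs_le hB hb.inCharCoords hf t ht (x * exp t) (by positivity)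
  rw [inCharCoords_mul_exp] at hline
  linarith

/-- The function `(t,x) ↦ x eᵗ` is the unique locally bounded mild solution with initial datum
`f(x) = x`; consequently `‖M_t f‖_Ḃ ≤ eᵗ ‖f‖_Ḃ`, i.e. `|M_t f(x)| ≤ eᵗ x ‖f‖_Ḃ` for `x > 0`. -/
theorem stmt4 (B : ℝ → ℝ) (hB : Bhyp B) :
    (LocBdd2 (fun t x => x * exp t) ∧ IsMildSol B (fun x => x) (fun t x => x * exp t)) ∧
    (∀ ψ : ℝ → ℝ → ℝ, LocBdd2 ψ → IsMildSol B (fun x => x) ψ →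
      ∀ t ≥ 0, ∀ x > 0, ψ t x = x * exp t) ∧
    (∀ f : ℝ → ℝ, ∀ C : ℝ, (∀ x > 0, |f x| ≤ C * x) →
      ∀ φ : ℝ → ℝ → ℝ, LocBdd2 φ → IsMildSol B f φ →
        ∀ t ≥ 0, ∀ x > 0, |φ t x| ≤ exp t * C * x) :=
  ⟨⟨locBdd2_mul_exp, isMildSol_mul_exp hB⟩,
    fun _ hψb hψ => hψ.eq_of_locBdd2 hB (isMildSol_mul_exp hB) hψb locBdd2_mul_exp,
    fun _ _ hf _ hφb hφ => hφ.abs_le hB hφb hf⟩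
end
end

section
/- Assume B : (0,∞) → [0,∞) is continuous and bounded on some neighborhood of 0. Let f : (0,∞) → ℝ be locally bounded and let (f_n)_{n∈ℕ} be an increasing sequence of locally bounded functions converging pointwise to f on (0,∞). Then for all t ≥ 0 and all x > 0, M_t f(x) = lim_{n→∞} M_t f_n(x). -/
/-!
Fix `t ≥ 0`, `x > 0` and put `c = x eᵗ`. Along the backward characteristics
`xₖ(s) = c 2⁻ᵏ e⁻ˢ`, the functions `Wₖ(s) = e^{Λₖ(s)} φ(s, xₖ(s))`, with `Λₖ` the division rate
accumulated along `xₖ`, satisfy a chain of Volterra equations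
`Wₖ(s) = f(c 2⁻ᵏ) + 2 ∫₀ˢ ρₖ(u) Wₖ₊₁(u) du` whose kernels `ρₖ` are bounded uniformly in `k`.
Iterating the chain `m` times bounds `|Wₖ - W'ₖ|` by the data differences at the finitely many
points `c 2⁻ᵏ⁻ʲ`, `j < m`, plus a remainder `C (2Ms)ᵐ / m!`. Monotonicity squeezes `fₙ` between
`f₀` and `f`, so all the `M_t fₙ` obey a common bound `C`; pointwise convergence of the data then
forces `W₀(t)` to converge, and `φ(t, x) = e^{-Λ₀(t)} W₀(t)`.
-/

open MeasureTheory Real Set Filter Topology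

noncomputable section

lemma aestronglyMeasurable_primitive_of_abs_le {F : ℝ → ℝ} {C T : ℝ}
    (hF : ∀ u ∈ Icc 0 T, |F u| ≤ C) :
    AEStronglyMeasurable (fun v => ∫ u in (0:ℝ)..v, F u) (volume.restrict (Icc 0 T)) := by
  set G : ℝ → ℝ := fun v => ∫ u in (0:ℝ)..v, F u
  -- `G` is a genuine primitive on the initial segment `S` where `F` is integrable, and `0` beyond
  set S : Set ℝ := {v | v ∈ Icc 0 T ∧ IntervalIntegrable F volume 0 v}
  have hS : OrdConnected S := by
    refine ⟨fun v hv w hw z hz => ⟨⟨hv.1.1.trans hz.1, hz.2.trans hw.1.2⟩, hw.2.mono_set ?_⟩⟩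
    rw [uIcc_of_le (hv.1.1.trans hz.1), uIcc_of_le hw.1.1]
    exact Icc_subset_Icc_right hz.2
  have hG : LipschitzOnWith (Real.toNNReal C) G S := by
    refine LipschitzOnWith.of_dist_le_mul fun u hu v hv => ?_
    rw [Real.dist_eq, Real.dist_eq, intervalIntegral.integral_interval_sub_left hu.2 hv.2]
    have hbound : ‖∫ z in v..u, F z‖ ≤ C * |u - v| :=
      intervalIntegral.norm_integral_le_of_norm_le_const fun z hz => ?_
    · exact hbound.trans (mul_le_mul_of_nonneg_right (Real.le_coe_toNNReal C) (abs_nonneg _))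
    rcases mem_uIoc.mp hz with hz | hz
    · exact hF z ⟨hv.1.1.trans hz.1.le, hz.2.trans hu.1.2⟩
    · exact hF z ⟨hu.1.1.trans hz.1.le, hz.2.trans hv.1.2⟩
  have hGS : AEStronglyMeasurable (S.indicator G) (volume.restrict (Icc 0 T)) :=
    ((aestronglyMeasurable_indicator_iff hS.measurableSet).mpr
      (hG.continuousOn.aestronglyMeasurable hS.measurableSet)).restrict
  refine hGS.congr ?_
  filter_upwards [ae_restrict_mem measurableSet_Icc] with v hv
  by_cases hvS : v ∈ S
  · exact indicator_of_mem hvS G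
  · rw [indicator_of_notMem hvS]
    exact (intervalIntegral.integral_undef fun h => hvS ⟨hv, h⟩).symm

open Nat in
lemma mul_integral_pow_div_factorial (L s : ℝ) (j : ℕ) :
    L * ∫ u in (0:ℝ)..s, (L * u) ^ j / j ! = (L * s) ^ (j + 1) / (j + 1)! := by
  simp only [mul_pow, intervalIntegral.integral_div, intervalIntegral.integral_const_mul,
    integral_pow, Nat.factorial_succ, Nat.cast_mul, Nat.cast_succ]
  have : (j ! : ℝ) ≠ 0 := by positivity
  field_simp
  ring

lemma tendsto_of_abs_sub_le {x : ℕ → ℝ} {y : ℝ} {u : ℕ → ℕ → ℝ} {v : ℕ → ℝ}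
    (hu : ∀ m, Tendsto (u m) atTop (𝓝 0)) (hv : Tendsto v atTop (𝓝 0))
    (h : ∀ m n, |x n - y| ≤ u m n + v m) : Tendsto x atTop (𝓝 y) := by
  refine Metric.tendsto_atTop.mpr fun ε hε => ?_
  obtain ⟨m, hm⟩ := (hv.eventually (gt_mem_nhds (half_pos hε))).exists
  obtain ⟨N, hN⟩ := eventually_atTop.mp ((hu m).eventually (gt_mem_nhds (half_pos hε)))
  exact ⟨N, fun n hn => by rw [Real.dist_eq]; linarith [h m n, hN n hn]⟩

lemma abs_le_abs_add_abs_of_monotone {g : ℕ → ℝ} {y : ℝ} (hg : Monotone g)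
    (hy : Tendsto g atTop (𝓝 y)) (n : ℕ) : |g n| ≤ |g 0| + |y| :=
  (abs_le_max_abs_abs (hg n.zero_le) (hg.ge_of_tendsto hy n)).trans
    (max_le_add_of_nonneg (abs_nonneg _) (abs_nonneg _))

def IsVolterraChainSol (ρ : ℕ → ℝ → ℝ) (a : ℕ → ℝ) (W : ℕ → ℝ → ℝ) (T : ℝ) : Prop :=
  ∀ k, ∀ s ∈ Icc 0 T, W k s = a k + 2 * ∫ u in (0:ℝ)..s, ρ k u * W (k + 1) u

namespace IsVolterraChainSol

variable {ρ W : ℕ → ℝ → ℝ} {a : ℕ → ℝ} {M C T : ℝ}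

theorem intervalIntegrable (hρ : ∀ k, Continuous (ρ k))
    (hρM : ∀ k, ∀ u ∈ Icc 0 T, |ρ k u| ≤ M) (hWC : ∀ k, ∀ s ∈ Icc 0 T, |W k s| ≤ C)
    (hW : IsVolterraChainSol ρ a W T) (k : ℕ) {s : ℝ} (hs : s ∈ Icc 0 T) :
    IntervalIntegrable (fun u => ρ k u * W (k + 1) u) volume 0 s := by
  have hbound : ∀ k, ∀ u ∈ Icc 0 T, |ρ k u * W (k + 1) u| ≤ M * C := fun k u hu => by
    rw [abs_mul]
    exact mul_le_mul (hρM k u hu) (hWC (k + 1) u hu) (abs_nonneg _)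
      ((abs_nonneg _).trans (hρM k u hu))
  -- the chain equation itself exhibits `W (k + 1)` as a primitive, hence measurable
  have hW₁ : AEStronglyMeasurable (W (k + 1)) (volume.restrict (Icc 0 T)) := by
    refine ((aestronglyMeasurable_primitive_of_abs_le (hbound (k + 1))).const_mul 2
      |>.const_add (a (k + 1))).congr ?_
    filter_upwards [ae_restrict_mem measurableSet_Icc] with v hv
    exact (hW (k + 1) v hv).symm
  have hsT : Icc 0 s ⊆ Icc 0 T := Icc_subset_Icc_right hs.2
  refine IntegrableOn.intervalIntegrable ?_
  rw [uIcc_of_le hs.1]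
  refine IntegrableOn.of_bound measure_Icc_lt_top
    ((hρ k).aestronglyMeasurable.restrict.mul (hW₁.mono_set hsT)) (M * C) ?_
  filter_upwards [ae_restrict_mem measurableSet_Icc] with u hu
  exact hbound k u (hsT hu)

theorem sub {a' : ℕ → ℝ} {W' : ℕ → ℝ → ℝ} {C' : ℝ} (hρ : ∀ k, Continuous (ρ k))
    (hρM : ∀ k, ∀ u ∈ Icc 0 T, |ρ k u| ≤ M) (hWC : ∀ k, ∀ s ∈ Icc 0 T, |W k s| ≤ C)
    (hW'C : ∀ k, ∀ s ∈ Icc 0 T, |W' k s| ≤ C')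
    (hW : IsVolterraChainSol ρ a W T) (hW' : IsVolterraChainSol ρ a' W' T) :
    IsVolterraChainSol ρ (fun k => a k - a' k) (fun k s => W k s - W' k s) T := by
  intro k s hs
  simp only [mul_sub]
  rw [intervalIntegral.integral_sub (hW.intervalIntegrable hρ hρM hWC k hs)
    (hW'.intervalIntegrable hρ hρM hW'C k hs), hW k s hs, hW' k s hs]
  ring

open Nat in
theorem abs_le_sum (hρM : ∀ k, ∀ u ∈ Icc 0 T, |ρ k u| ≤ M) (hWC : ∀ k, ∀ s ∈ Icc 0 T, |W k s| ≤ C)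
    (hW : IsVolterraChainSol ρ a W T) (m k : ℕ) {s : ℝ} (hs : s ∈ Icc 0 T) :
    |W k s| ≤ ∑ j ∈ Finset.range m, |a (k + j)| * ((2 * M * s) ^ j / j !)
      + C * ((2 * M * s) ^ m / m !) := by
  induction m generalizing k s with
  | zero => simpa using hWC k s hs
  | succ m ih =>
    have hM : 0 ≤ M := (abs_nonneg _).trans (hρM k s hs)
    set g : ℝ → ℝ := fun u => ∑ j ∈ Finset.range m, |a (k + 1 + j)| * ((2 * M * u) ^ j / j !)
      + C * ((2 * M * u) ^ m / m !)
    have hg : Continuous g := by fun_prop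
    have hnorm : ‖∫ u in (0:ℝ)..s, ρ k u * W (k + 1) u‖ ≤ ∫ u in (0:ℝ)..s, M * g u := by
      refine intervalIntegral.norm_integral_le_of_norm_le hs.1
        (Eventually.of_forall fun u hu => ?_) ((continuous_const.mul hg).intervalIntegrable _ _)
      have hu' : u ∈ Icc 0 T := ⟨hu.1.le, hu.2.trans hs.2⟩
      rw [Real.norm_eq_abs, abs_mul]
      exact mul_le_mul (hρM k u hu') (ih (k + 1) hu') (abs_nonneg _) hM
    have hgint : 2 * ∫ u in (0:ℝ)..s, M * g u =
        ∑ j ∈ Finset.range m, |a (k + 1 + j)| * ((2 * M * s) ^ (j + 1) / (j + 1)!)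
          + C * ((2 * M * s) ^ (m + 1) / (m + 1)!) := by
      have hpow : ∀ j, IntervalIntegrable (fun u : ℝ => (2 * M * u) ^ j / j !) volume 0 s :=
        fun j => (continuous_const.mul continuous_id |>.pow j |>.div_const _).intervalIntegrable _ _
      simp only [g, ← mul_integral_pow_div_factorial, mul_add, Finset.mul_sum]
      rw [intervalIntegral.integral_add, intervalIntegral.integral_finsetSum]
      · simp only [intervalIntegral.integral_const_mul, mul_add, Finset.mul_sum]
        congr 1
        · exact Finset.sum_congr rfl fun j _ => by ring
        · ring
      · exact fun j _ => (hpow j).const_mul _ |>.const_mul _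
      · simpa only [← Finset.sum_fn] using
          IntervalIntegrable.sum _ fun j _ => (hpow j).const_mul _ |>.const_mul _
      · exact (hpow m).const_mul _ |>.const_mul _
    calc |W k s| ≤ |a k| + 2 * ‖∫ u in (0:ℝ)..s, ρ k u * W (k + 1) u‖ := by
          rw [hW k s hs]
          exact (abs_add_le _ _).trans_eq (by rw [abs_mul, abs_two, Real.norm_eq_abs])
      _ ≤ |a k| + 2 * ∫ u in (0:ℝ)..s, M * g u := by linarith
      _ = _ := by
          rw [hgint, Finset.sum_range_succ' _ m]
          simp only [add_zero, pow_zero, factorial_zero, Nat.cast_one, div_one, mul_one,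
            Nat.add_right_comm k 1, ← add_assoc]
          ring

open Nat in
theorem abs_le_mul_exp (hρM : ∀ k, ∀ u ∈ Icc 0 T, |ρ k u| ≤ M)
    (hWC : ∀ k, ∀ s ∈ Icc 0 T, |W k s| ≤ C) (hW : IsVolterraChainSol ρ a W T) {A : ℝ}
    (ha : ∀ k, |a k| ≤ A) (k : ℕ) {s : ℝ} (hs : s ∈ Icc 0 T) :
    |W k s| ≤ A * exp (2 * M * s) := by
  have hMs : 0 ≤ 2 * M * s := by
    have := (abs_nonneg _).trans (hρM k s hs); have := hs.1; positivity
  have hsum : ∀ m, ∑ j ∈ Finset.range m, |a (k + j)| * ((2 * M * s) ^ j / j !)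
      ≤ A * exp (2 * M * s) := fun m =>
    calc _ ≤ ∑ j ∈ Finset.range m, A * ((2 * M * s) ^ j / j !) :=
          Finset.sum_le_sum fun j _ => mul_le_mul_of_nonneg_right (ha _) (by positivity)
      _ ≤ A * exp (2 * M * s) := by
          rw [← Finset.mul_sum]
          exact mul_le_mul_of_nonneg_left (sum_le_exp_of_nonneg hMs m) ((abs_nonneg _).trans (ha 0))
  have htail := (FloorSemiring.tendsto_pow_div_factorial_atTop (2 * M * s)).const_mul C
  rw [mul_zero] at htail
  refine le_of_tendsto_of_tendsto tendsto_const_nhds (tendsto_const_nhds.add htail)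
    (Eventually.of_forall fun m => (hW.abs_le_sum hρM hWC m k hs).trans ?_) |>.trans_eq (add_zero _)
  exact add_le_add_left (hsum m) _

open Nat in
theorem tendsto {a' : ℕ → ℕ → ℝ} {W' : ℕ → ℕ → ℝ → ℝ} {C' : ℝ} (hρ : ∀ k, Continuous (ρ k))
    (hρM : ∀ k, ∀ u ∈ Icc 0 T, |ρ k u| ≤ M) (hWC : ∀ k, ∀ s ∈ Icc 0 T, |W k s| ≤ C)
    (hW'C : ∀ n k, ∀ s ∈ Icc 0 T, |W' n k s| ≤ C') (hW : IsVolterraChainSol ρ a W T)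
    (hW' : ∀ n, IsVolterraChainSol ρ (a' n) (W' n) T)
    (ha : ∀ k, Tendsto (fun n => a' n k) atTop (𝓝 (a k))) (k : ℕ) {s : ℝ} (hs : s ∈ Icc 0 T) :
    Tendsto (fun n => W' n k s) atTop (𝓝 (W k s)) := by
  have hdiff : ∀ n, IsVolterraChainSol ρ (fun k => a' n k - a k) (fun k s => W' n k s - W k s) T :=
    fun n => (hW' n).sub hρ hρM (hW'C n) hWC hW
  have hdiffC : ∀ n k, ∀ s ∈ Icc 0 T, |W' n k s - W k s| ≤ C' + C :=
    fun n k s hs => (abs_sub _ _).trans (add_le_add (hW'C n k s hs) (hWC k s hs))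
  refine tendsto_of_abs_sub_le (fun m => ?_) ?_
    fun m n => (hdiff n).abs_le_sum hρM (hdiffC n) m k hs
  · have hterm : ∀ j, Tendsto (fun n => |a' n (k + j) - a (k + j)|) atTop (𝓝 0) := fun j => by
      simpa using ((ha (k + j)).sub_const (a (k + j))).abs
    simpa using tendsto_finsetSum _ fun j _ => (hterm j).mul_const ((2 * M * s) ^ j / j !)
  · simpa using (FloorSemiring.tendsto_pow_div_factorial_atTop (2 * M * s)).const_mul (C' + C)

end IsVolterraChainSol

def charCurve (c : ℝ) (k : ℕ) (s : ℝ) : ℝ := c / 2 ^ k * exp (-s)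

section charCurve

variable {c : ℝ} {k : ℕ} {s : ℝ}

lemma charCurve_pos (hc : 0 < c) : 0 < charCurve c k s := by unfold charCurve; positivity

lemma charCurve_le (hc : 0 ≤ c) (hs : 0 ≤ s) : charCurve c k s ≤ c := by
  unfold charCurve
  calc c / 2 ^ k * exp (-s) ≤ c * 1 := by
        gcongr
        · exact div_le_self hc (one_le_pow₀ one_le_two)
        · exact exp_le_one_iff.mpr (neg_nonpos.mpr hs)
    _ = c := mul_one c

lemma charCurve_zero (c : ℝ) (k : ℕ) : charCurve c k 0 = c / 2 ^ k := by simp [charCurve]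

lemma charCurve_mul_exp (c : ℝ) (k : ℕ) (s σ : ℝ) :
    charCurve c k s * exp σ = charCurve c k (s - σ) := by
  rw [charCurve, charCurve, mul_assoc, ← exp_add]; ring_nf

lemma charCurve_succ (c : ℝ) (k : ℕ) (s : ℝ) : charCurve c (k + 1) s = charCurve c k s / 2 := by
  rw [charCurve, charCurve, pow_succ]; ring

end charCurve

def cumHazard (B : ℝ → ℝ) (c : ℝ) (k : ℕ) (s : ℝ) : ℝ := ∫ u in (0:ℝ)..s, B (charCurve c k u)

def chainKernel (B : ℝ → ℝ) (c : ℝ) (k : ℕ) (u : ℝ) : ℝ :=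
  B (charCurve c k u) * exp (cumHazard B c k u - cumHazard B c (k + 1) u)

def charTransform (B : ℝ → ℝ) (c : ℝ) (φ : ℝ → ℝ → ℝ) (k : ℕ) (s : ℝ) : ℝ :=
  exp (cumHazard B c k s) * φ s (charCurve c k s)

section hazard

variable {B : ℝ → ℝ} {c : ℝ}

lemma Bhyp.exists_bound_s5 (hB : Bhyp B) (c : ℝ) : ∃ K, 0 ≤ K ∧ ∀ y ∈ Ioc 0 c, B y ≤ K := by
  obtain ⟨hcont, -, ε, hε, C₁, hC₁⟩ := hB
  obtain ⟨C₂, hC₂⟩ := (isCompact_Icc (a := ε) (b := c)).bddAbove_image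
    (hcont.mono fun y hy => hε.trans_le hy.1)
  refine ⟨max 0 (max C₁ C₂), le_max_left _ _, fun y hy => (le_max_right _ _).trans' ?_⟩
  rcases lt_or_ge y ε with h | h
  · exact (hC₁ y hy.1 h).trans (le_max_left _ _)
  · exact (hC₂ ⟨y, ⟨h, hy.2⟩, rfl⟩).trans (le_max_right _ _)

lemma continuous_comp_charCurve (hB : ContinuousOn B (Ioi 0)) (hc : 0 < c) (k : ℕ) :
    Continuous fun u => B (charCurve c k u) :=
  hB.comp_continuous (by unfold charCurve; fun_prop) fun _ => charCurve_pos hc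

lemma integral_comp_charCurve_sub (hB : ContinuousOn B (Ioi 0)) (hc : 0 < c) (k : ℕ)
    (s τ : ℝ) :
    ∫ σ in (0:ℝ)..τ, B (charCurve c k (s - σ)) = cumHazard B c k s - cumHazard B c k (s - τ) := by
  have hint := (continuous_comp_charCurve hB hc k).intervalIntegrable (μ := volume)
  rw [intervalIntegral.integral_comp_sub_left (fun u => B (charCurve c k u)), sub_zero,
    ← intervalIntegral.integral_interval_sub_left (hint 0 s) (hint 0 (s - τ))]
  rfl

lemma cumHazard_zero (B : ℝ → ℝ) (c : ℝ) (k : ℕ) : cumHazard B c k 0 = 0 :=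
  intervalIntegral.integral_same

lemma continuous_cumHazard (hB : ContinuousOn B (Ioi 0)) (hc : 0 < c) (k : ℕ) :
    Continuous (cumHazard B c k) :=
  intervalIntegral.continuous_primitive
    (fun _ _ => (continuous_comp_charCurve hB hc k).intervalIntegrable _ _) 0

lemma cumHazard_nonneg (hB : ∀ x > 0, 0 ≤ B x) (hc : 0 < c) (k : ℕ) {s : ℝ} (hs : 0 ≤ s) :
    0 ≤ cumHazard B c k s :=
  intervalIntegral.integral_nonneg hs fun _ _ => hB _ (charCurve_pos hc)

lemma cumHazard_le (hB : ContinuousOn B (Ioi 0)) (hc : 0 < c) {K : ℝ}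
    (hK : ∀ y ∈ Ioc 0 c, B y ≤ K) (k : ℕ) {s : ℝ} (hs : 0 ≤ s) :
    cumHazard B c k s ≤ K * s := by
  have := intervalIntegral.integral_mono_on hs
    ((continuous_comp_charCurve hB hc k).intervalIntegrable 0 s)
    (intervalIntegrable_const (μ := volume))
    fun u hu => hK _ ⟨charCurve_pos hc, charCurve_le hc.le hu.1⟩
  simpa [cumHazard, mul_comm] using this

lemma continuous_chainKernel (hB : ContinuousOn B (Ioi 0)) (hc : 0 < c) (k : ℕ) :
    Continuous (chainKernel B c k) :=
  (continuous_comp_charCurve hB hc k).mul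
    ((continuous_cumHazard hB hc k).sub (continuous_cumHazard hB hc (k + 1))).rexp

lemma abs_chainKernel_le (hB : Bhyp B) (hc : 0 < c) {K : ℝ} (hK0 : 0 ≤ K)
    (hK : ∀ y ∈ Ioc 0 c, B y ≤ K) (k : ℕ) {T u : ℝ} (hu : u ∈ Icc 0 T) :
    |chainKernel B c k u| ≤ K * exp (K * T) := by
  rw [chainKernel, abs_mul, abs_of_nonneg (hB.2.1 _ (charCurve_pos hc)), abs_exp]
  refine mul_le_mul (hK _ ⟨charCurve_pos hc, charCurve_le hc.le hu.1⟩) (exp_le_exp.mpr ?_)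
    (exp_nonneg _) hK0
  have := cumHazard_le hB.1 hc hK k hu.1
  have := cumHazard_nonneg hB.2.1 hc (k + 1) hu.1
  have := mul_le_mul_of_nonneg_left hu.2 hK0
  linarith

end hazard

section mildSolution

variable {B f : ℝ → ℝ} {φ : ℝ → ℝ → ℝ} {c : ℝ}

theorem IsMildSol.isVolterraChainSol (hB : ContinuousOn B (Ioi 0)) (hc : 0 < c)
    (hφ : IsMildSol B f φ) (T : ℝ) :
    IsVolterraChainSol (chainKernel B c) (fun k => f (c / 2 ^ k)) (charTransform B c φ) T := by
  intro k s hs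
  have E := hφ s hs.1 _ (charCurve_pos hc (k := k) (s := s))
  simp only [charCurve_mul_exp, ← charCurve_succ, integral_comp_charCurve_sub hB hc, sub_self,
    charCurve_zero] at E
  have hintegrand : ∀ τ, B (charCurve c k (s - τ)) *
      exp (-(cumHazard B c k s - cumHazard B c k (s - τ))) * φ (s - τ) (charCurve c (k + 1) (s - τ))
      = exp (-cumHazard B c k s) *
        (chainKernel B c k (s - τ) * charTransform B c φ (k + 1) (s - τ)) := fun τ => by
    simp only [chainKernel, charTransform, exp_sub, exp_neg]
    field_simp
  simp only [hintegrand, intervalIntegral.integral_const_mul] at E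
  rw [intervalIntegral.integral_comp_sub_left
    (fun u => chainKernel B c k u * charTransform B c φ (k + 1) u) s, sub_self, sub_zero] at E
  rw [charTransform, E, cumHazard_zero, sub_zero, exp_neg]
  field_simp

lemma apply_eq_charTransform (B : ℝ → ℝ) (φ : ℝ → ℝ → ℝ) (t x : ℝ) :
    φ t x = exp (-cumHazard B (x * exp t) 0 t) * charTransform B (x * exp t) φ 0 t := by
  rw [charTransform, ← mul_assoc, ← exp_add, neg_add_cancel, exp_zero, one_mul, charCurve,
    pow_zero, div_one, mul_assoc, ← exp_add, add_neg_cancel, exp_zero, mul_one]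

lemma LocBdd2.exists_abs_charTransform_le (hφ : LocBdd2 φ) (hB : Bhyp B) (hc : 0 < c) (T : ℝ) :
    ∃ C, ∀ k, ∀ s ∈ Icc 0 T, |charTransform B c φ k s| ≤ C := by
  obtain ⟨K, hK0, hK⟩ := hB.exists_bound_s5 c
  obtain ⟨C, hC⟩ := hφ (max T c) (lt_max_of_lt_right hc)
  refine ⟨exp (K * T) * C, fun k s hs => ?_⟩
  rw [charTransform, abs_mul, abs_exp]
  refine mul_le_mul (exp_le_exp.mpr ?_) (hC _ _ hs.1 (hs.2.trans (le_max_left _ _))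
    (charCurve_pos hc) ((charCurve_le hc.le hs.1).trans (le_max_right _ _))) (abs_nonneg _)
    (exp_nonneg _)
  exact (cumHazard_le hB.1 hc hK k hs.1).trans (mul_le_mul_of_nonneg_left hs.2 hK0)

end mildSolution

/-- Monotone convergence for the dual semigroup: if an increasing sequence of locally bounded
functions `fₙ` converges pointwise on `(0,∞)` to a locally bounded `f`, then `M_t fₙ(x) → M_t f(x)`
for all `t ≥ 0` and `x > 0`. -/
theorem stmt5 (B : ℝ → ℝ) (hB : Bhyp B)
    (f : ℝ → ℝ) (hf : LocBddOn f)
    (fn : ℕ → ℝ → ℝ) (hfn : ∀ n, LocBddOn (fn n))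
    (hmono : ∀ n, ∀ x > 0, fn n x ≤ fn (n + 1) x)
    (hlim : ∀ x > 0, Tendsto (fun n => fn n x) atTop (nhds (f x)))
    (φ : ℝ → ℝ → ℝ) (hφ : LocBdd2 φ) (hφsol : IsMildSol B f φ)
    (φn : ℕ → ℝ → ℝ → ℝ) (hφn : ∀ n, LocBdd2 (φn n) ∧ IsMildSol B (fn n) (φn n)) :
    ∀ t ≥ 0, ∀ x > 0, Tendsto (fun n => φn n t x) atTop (nhds (φ t x)) := by
  intro t ht x hx
  set c := x * exp t
  have hc : 0 < c := by positivity
  have hcurve : ∀ k, c / 2 ^ k ∈ Ioc 0 c := fun k => by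
    rw [← charCurve_zero c k]; exact ⟨charCurve_pos hc, charCurve_le hc.le le_rfl⟩
  obtain ⟨K, hK0, hK⟩ := hB.exists_bound_s5 c
  set M := K * exp (K * t)
  have hρM : ∀ k, ∀ u ∈ Icc 0 t, |chainKernel B c k u| ≤ M :=
    fun k _ hu => abs_chainKernel_le hB hc hK0 hK k hu
  obtain ⟨A, hA⟩ : ∃ A, ∀ n k, |fn n (c / 2 ^ k)| ≤ A := by
    obtain ⟨C₀, hC₀⟩ := hfn 0 c hc
    obtain ⟨C, hC⟩ := hf c hc
    refine ⟨C₀ + C, fun n k => ?_⟩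
    have hy := hcurve k
    exact (abs_le_abs_add_abs_of_monotone (monotone_nat_of_le_succ fun n => hmono n _ hy.1)
      (hlim _ hy.1) n).trans (add_le_add (hC₀ _ hy.1 hy.2) (hC _ hy.1 hy.2))
  have hchain := fun ψ g (hψ : IsMildSol B g ψ) => hψ.isVolterraChainSol hB.1 hc t
  have hWnC : ∀ n k, ∀ s ∈ Icc 0 t, |charTransform B c (φn n) k s| ≤ A * exp (2 * M * t) := by
    intro n k s hs
    obtain ⟨Cn, hCn⟩ := (hφn n).1.exists_abs_charTransform_le hB hc t
    refine ((hchain _ _ (hφn n).2).abs_le_mul_exp hρM hCn (hA n) k hs).trans ?_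
    have := (abs_nonneg _).trans (hA 0 0)
    gcongr
    exact hs.2
  obtain ⟨C, hWC⟩ := hφ.exists_abs_charTransform_le hB hc t
  have hW := (hchain _ _ hφsol).tendsto (continuous_chainKernel hB.1 hc) hρM hWC hWnC
    (fun n => hchain _ _ (hφn n).2) (fun k => hlim _ (hcurve k).1) 0 ⟨ht, le_rfl⟩
  convert hW.const_mul (exp (-cumHazard B c 0 t)) using 2 <;> apply apply_eq_charTransform
end
end
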